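/- Let N ≥ 1, let α, c₁, …, c_N ∈ ℝ with Σᵢ cᵢ = 0, and let w₁, …, w_N : ℝ² → ℝ be smooth functions of (x,t). Set u = Σ_{j=1}^N c_j w_j and u₂ = Σ_{j=1}^N (c_j/2) w_j². Suppose that for every i, ∂_t wᵢ = ( wᵢ² − α wᵢ u − α u₂ + u ) ∂_x wᵢ + ( wᵢ − α u ) ∂_x u + ∂_x u₂ holds everywhere. Then for every (x,t) ∈ ℝ² and every p ∈ ℝ with p > max_i wᵢ(x,t), the function L(x,t,p) = p − Σᵢ cᵢ ln(p − wᵢ(x,t)) satisfies the t-flow Lax equation ∂_t L = ( p² − α u p − α u₂ + u ) ∂_x L − ( (∂_x u) p − α u ∂_x u + ∂_x u₂ ) ∂_p L. -/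

import Mathlib

/-- Partial derivative in `x` of a function on `ℝ² = (x,t)`. -/
noncomputable def pdx (f : ℝ × ℝ → ℝ) (q : ℝ × ℝ) : ℝ :=
  deriv (fun s => f (s, q.2)) q.1

/-- Partial derivative in `t` of a function on `ℝ² = (x,t)`. -/
noncomputable def pdt (f : ℝ × ℝ → ℝ) (q : ℝ × ℝ) : ℝ :=
  deriv (fun s => f (q.1, s)) q.2

/-- Partial derivative in `x` of a function on `ℝ³ = (x,t,p)`. -/
noncomputable def pd3x (f : ℝ × ℝ × ℝ → ℝ) (r : ℝ × ℝ × ℝ) : ℝ :=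
  deriv (fun s => f (s, r.2.1, r.2.2)) r.1

/-- Partial derivative in `t` of a function on `ℝ³ = (x,t,p)`. -/
noncomputable def pd3t (f : ℝ × ℝ × ℝ → ℝ) (r : ℝ × ℝ × ℝ) : ℝ :=
  deriv (fun s => f (r.1, s, r.2.2)) r.2.1

/-- Partial derivative in the spectral variable `p` of a function on `ℝ³ = (x,t,p)`. -/
noncomputable def pd3p (f : ℝ × ℝ × ℝ → ℝ) (r : ℝ × ℝ × ℝ) : ℝ :=
  deriv (fun s => f (r.1, r.2.1, s)) r.2.2

/-- The waterbag Lax function `L(x,t,p) = p − Σᵢ cᵢ ln(p − wᵢ(x,t))`. -/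
noncomputable def waterbagL {N : ℕ} (c : Fin N → ℝ) (w : Fin N → ℝ × ℝ → ℝ)
    (r : ℝ × ℝ × ℝ) : ℝ :=
  r.2.2 - ∑ i, c i * Real.log (r.2.2 - w i (r.1, r.2.1))

/-
Along any curve `s ↦ (x(s), t(s), p(s))` the Lax function differentiates termwise:
`∂_x L = Σ cᵢ ∂_x wᵢ/(p − wᵢ)`, `∂_t L = Σ cᵢ ∂_t wᵢ/(p − wᵢ)` and `∂_p L = 1 − Σ cᵢ/(p − wᵢ)`.
After substituting the system for `∂_t wᵢ`, the `i`-th terms of the two sides of the Lax equation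
differ by the polynomial `cᵢ((p + wᵢ − α u)∂_x wᵢ + ∂_x u)`. Summed over `i` these give
`u_x p − α u u_x + ∂_x u₂`, which matches the `1` in `∂_p L`, plus `(Σ cᵢ) u_x = 0`.
-/

open Finset Real

section

variable {ι : Type*} [Fintype ι]

theorem hasDerivAt_sub_sum_mul_log_sub {c : ι → ℝ} {P : ℝ → ℝ} {W : ι → ℝ → ℝ} {P' x : ℝ}
    {W' : ι → ℝ} (hP : HasDerivAt P P' x) (hW : ∀ i, HasDerivAt (W i) (W' i) x)
    (hne : ∀ i, W i x ≠ P x) :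
    HasDerivAt (fun s => P s - ∑ i, c i * log (P s - W i s))
      (P' - ∑ i, c i * ((P' - W' i) / (P x - W i x))) x :=
  hP.sub <| HasDerivAt.fun_sum fun i _ =>
    ((hP.sub (hW i)).log (sub_ne_zero.2 (hne i).symm)).const_mul (c i)

theorem hasDerivAt_pdx {f : ℝ × ℝ → ℝ} {q : ℝ × ℝ} (hf : DifferentiableAt ℝ f q) :
    HasDerivAt (fun s => f (s, q.2)) (pdx f q) q.1 :=
  (hf.comp q.1 (differentiableAt_id.prodMk (differentiableAt_const _))).hasDerivAt

theorem hasDerivAt_pdt {f : ℝ × ℝ → ℝ} {q : ℝ × ℝ} (hf : DifferentiableAt ℝ f q) :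
    HasDerivAt (fun s => f (q.1, s)) (pdt f q) q.2 :=
  (hf.comp q.2 ((differentiableAt_const _).prodMk differentiableAt_id)).hasDerivAt

theorem pdx_sum_const_mul {c : ι → ℝ} {w : ι → ℝ × ℝ → ℝ} {q : ℝ × ℝ}
    (hw : ∀ j, DifferentiableAt ℝ (w j) q) :
    pdx (fun q => ∑ j, c j * w j q) q = ∑ j, c j * pdx (w j) q :=
  (HasDerivAt.fun_sum fun j _ => (hasDerivAt_pdx (hw j)).const_mul (c j)).deriv

theorem pdx_sum_const_mul_sq {c : ι → ℝ} {w : ι → ℝ × ℝ → ℝ} {q : ℝ × ℝ}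
    (hw : ∀ j, DifferentiableAt ℝ (w j) q) :
    pdx (fun q => ∑ j, c j / 2 * w j q ^ 2) q = ∑ j, c j * w j q * pdx (w j) q := by
  refine (HasDerivAt.fun_sum fun j _ => ?_).deriv
  refine (((hasDerivAt_pdx (hw j)).fun_pow 2).const_mul (c j / 2)).congr_deriv ?_
  push_cast
  ring

theorem lax_equation_of_waterbag_system {c w wx wt : ι → ℝ} {α u u₂ ux u₂x p : ℝ}
    (hc : ∑ i, c i = 0) (hux : ux = ∑ i, c i * wx i) (hu₂x : u₂x = ∑ i, c i * w i * wx i)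
    (hp : ∀ i, w i ≠ p)
    (hflow : ∀ i, wt i = (w i ^ 2 - α * w i * u - α * u₂ + u) * wx i + (w i - α * u) * ux + u₂x) :
    ∑ i, c i * (wt i / (p - w i))
      = (p ^ 2 - α * u * p - α * u₂ + u) * ∑ i, c i * (wx i / (p - w i))
        - (ux * p - α * u * ux + u₂x) * (1 - ∑ i, c i * (1 / (p - w i))) := by
  have termwise : ∀ i, c i * (wt i / (p - w i))
      = (p ^ 2 - α * u * p - α * u₂ + u) * (c i * (wx i / (p - w i)))
        + (ux * p - α * u * ux + u₂x) * (c i * (1 / (p - w i)))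
        - (p * (c i * wx i) + c i * w i * wx i - α * u * (c i * wx i) + c i * ux) := by
    intro i
    have hpw : p - w i ≠ 0 := sub_ne_zero.2 (hp i).symm
    rw [hflow i]
    field_simp
    ring
  rw [sum_congr rfl fun i _ => termwise i, sum_sub_distrib, sum_add_distrib, ← mul_sum, ← mul_sum,
    sum_add_distrib, sum_sub_distrib, sum_add_distrib, ← mul_sum, ← mul_sum, ← sum_mul, hc,
    ← hux, ← hu₂x]
  ring

end

section

variable {N : ℕ} {c : Fin N → ℝ} {w : Fin N → ℝ × ℝ → ℝ} {q : ℝ × ℝ} {p : ℝ}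

theorem pd3x_waterbagL (hw : ∀ i, DifferentiableAt ℝ (w i) q) (hp : ∀ i, w i q ≠ p) :
    pd3x (waterbagL c w) (q.1, q.2, p) = ∑ i, c i * (pdx (w i) q / (p - w i q)) := by
  have h := hasDerivAt_sub_sum_mul_log_sub (c := c) (hasDerivAt_const q.1 p)
    (fun i => hasDerivAt_pdx (hw i)) hp
  exact h.deriv.trans (by simp [neg_div])

theorem pd3t_waterbagL (hw : ∀ i, DifferentiableAt ℝ (w i) q) (hp : ∀ i, w i q ≠ p) :
    pd3t (waterbagL c w) (q.1, q.2, p) = ∑ i, c i * (pdt (w i) q / (p - w i q)) := by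
  have h := hasDerivAt_sub_sum_mul_log_sub (c := c) (hasDerivAt_const q.2 p)
    (fun i => hasDerivAt_pdt (hw i)) hp
  exact h.deriv.trans (by simp [neg_div])

theorem pd3p_waterbagL (hp : ∀ i, w i q ≠ p) :
    pd3p (waterbagL c w) (q.1, q.2, p) = 1 - ∑ i, c i * (1 / (p - w i q)) := by
  have h := hasDerivAt_sub_sum_mul_log_sub (c := c) (hasDerivAt_id' p)
    (fun i => hasDerivAt_const p (w i q)) hp
  exact h.deriv.trans (by simp)

end

theorem waterbag_t_flow_general (N : ℕ) (α : ℝ) (c : Fin N → ℝ)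
    (hc : ∑ i, c i = 0) (w : Fin N → ℝ × ℝ → ℝ)
    (hw : ∀ i, ContDiff ℝ (⊤ : ℕ∞) (w i))
    (u u₂ : ℝ × ℝ → ℝ) (hu : ∀ q : ℝ × ℝ, u q = ∑ j, c j * w j q)
    (hu₂ : ∀ q : ℝ × ℝ, u₂ q = ∑ j, (c j / 2) * (w j q) ^ 2)
    (hflow : ∀ i, ∀ q : ℝ × ℝ,
      pdt (w i) q
        = ((w i q) ^ 2 - α * w i q * u q - α * u₂ q + u q) * pdx (w i) q
          + (w i q - α * u q) * pdx u q + pdx u₂ q) :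
    ∀ q : ℝ × ℝ, ∀ p : ℝ, (∀ i, w i q < p) →
      pd3t (waterbagL c w) (q.1, q.2, p)
        = (p ^ 2 - α * u q * p - α * u₂ q + u q) * pd3x (waterbagL c w) (q.1, q.2, p)
          - (pdx u q * p - α * u q * pdx u q + pdx u₂ q)
            * pd3p (waterbagL c w) (q.1, q.2, p) := by
  intro q p hp
  have hwq : ∀ i, DifferentiableAt ℝ (w i) q :=
    fun i => ((hw i).differentiable (by simp)).differentiableAt
  have hne : ∀ i, w i q ≠ p := fun i => (hp i).ne
  obtain rfl : u = fun q => ∑ j, c j * w j q := funext hu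
  obtain rfl : u₂ = fun q => ∑ j, c j / 2 * w j q ^ 2 := funext hu₂
  rw [pd3t_waterbagL hwq hne, pd3x_waterbagL hwq hne, pd3p_waterbagL hne]
  exact lax_equation_of_waterbag_system hc (pdx_sum_const_mul hwq) (pdx_sum_const_mul_sq hwq) hne
    fun i => hflow i q

/-- If the waterbag fields `wᵢ` satisfy the hydrodynamic-type system
`∂_t wᵢ = (wᵢ² − α wᵢ u − α u₂ + u)∂_x wᵢ + (wᵢ − α u)∂_x u + ∂_x u₂` with
`u = Σⱼ cⱼ wⱼ` and `u₂ = Σⱼ (cⱼ/2) wⱼ²`, then the waterbag Lax function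
`L = p − Σᵢ cᵢ ln(p − wᵢ)` satisfies the `t`-flow Lax equation
`∂_t L = (p² − α u p − α u₂ + u)∂_x L − (u_x p − α u u_x + ∂_x u₂)∂_p L`
wherever `p > maxᵢ wᵢ`. -/
theorem waterbag_t_flow (N : ℕ) (hN : 1 ≤ N) (α : ℝ) (c : Fin N → ℝ)
    (hc : ∑ i, c i = 0) (w : Fin N → ℝ × ℝ → ℝ)
    (hw : ∀ i, ContDiff ℝ (⊤ : ℕ∞) (w i))
    (u u₂ : ℝ × ℝ → ℝ) (hu : ∀ q : ℝ × ℝ, u q = ∑ j, c j * w j q)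
    (hu₂ : ∀ q : ℝ × ℝ, u₂ q = ∑ j, (c j / 2) * (w j q) ^ 2)
    (hflow : ∀ i, ∀ q : ℝ × ℝ,
      pdt (w i) q
        = ((w i q) ^ 2 - α * w i q * u q - α * u₂ q + u q) * pdx (w i) q
          + (w i q - α * u q) * pdx u q + pdx u₂ q) :
    ∀ q : ℝ × ℝ, ∀ p : ℝ, (∀ i, w i q < p) →
      pd3t (waterbagL c w) (q.1, q.2, p)
        = (p ^ 2 - α * u q * p - α * u₂ q + u q) * pd3x (waterbagL c w) (q.1, q.2, p)
          - (pdx u q * p - α * u q * pdx u q + pdx u₂ q)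
            * pd3p (waterbagL c w) (q.1, q.2, p) :=
  waterbag_t_flow_general N α c hc w hw u u₂ hu hu₂ hflow
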